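/- Let {G, Γ0, Γ1} be a quasi boundary triple for A* with ran Γ0 = G, A1 = T↾ker Γ1 self-adjoint, and M(λ0) compact for some λ0 ∈ ρ(A0). If B is a bounded self-adjoint operator on G, then the extension A_[B] := T↾ker(BΓ1 − Γ0) is self-adjoint in H, and for λ ∈ ρ(A_[B]) ∩ ρ(A0) one has (A_[B] − λ)^{-1} − (A0 − λ)^{-1} = γ(λ)(I − BM(λ))^{-1} B γ(λ̄)* = γ(λ) B (I − M(λ)B)^{-1} γ(λ̄)*, with (I − BM(λ))^{-1} and (I − M(λ)B)^{-1} bounded on G. -/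

import Mathlib

/-!
The Robin boundary map `N = BΓ₁ - Γ₀` maps `dom T` onto `G`: its range is dense because
`(Γ₀, Γ₁)` has dense range, and it contains the range of `1 - BM(λ₀)`, which is closed and of
finite codimension because `BM(λ₀)` is compact. As `λ ∈ ρ(A_[B])`, every value of `N` is already
taken on `ker (T - λ)`, where `N = -(1 - BM(λ))Γ₀`; so `1 - BM(λ)` is onto, and it is injective
because `λ` is not an eigenvalue of `A_[B]`. Then `1 - M(λ)B` is invertible too (Jacobson's lemma).
Green's identity makes `A_[B]` symmetric and gives `M(λ̄) = M(λ)*`, so `1 - BM(λ̄) = (1 - M(λ)B)*`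
is invertible and `A_[B] - λ̄` is onto; a symmetric operator with `λ` in its resolvent set and
`ran (A - λ̄) = H` is self-adjoint. For Krein's formula, `f = (A_[B] - λ)⁻¹x - (A₀ - λ)⁻¹x` lies in
`ker (T - λ)`, and the boundary condition satisfied by `(A_[B] - λ)⁻¹x` reads
`(1 - BM(λ))Γ₀ f = Bγ(λ̄)*x`.
-/

variable {H G : Type*}
  [NormedAddCommGroup H] [InnerProductSpace ℂ H] [CompleteSpace H]
  [NormedAddCommGroup G] [InnerProductSpace ℂ G] [CompleteSpace G]

/-- The restriction of the partially defined operator `T` to the kernel of a boundary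
map `Γ` (e.g. `A0 = T ↾ ker Γ0`). -/
noncomputable def kerRestrict (T : H →ₗ.[ℂ] H) {G' : Type*} [AddCommGroup G'] [Module ℂ G']
    (Γ : T.domain →ₗ[ℂ] G') : H →ₗ.[ℂ] H :=
  T.domRestrict (Submodule.map T.domain.subtype (LinearMap.ker Γ))

/-- `{G, Γ0, Γ1}` is a quasi boundary triple for `A* = T̄` : the domain of `T` is dense,
the joint boundary map `(Γ0, Γ1)` has dense range in `G × G`, `A0 := T ↾ ker Γ0` is
self-adjoint, the abstract Green identity holds, and the closure of `T` is the adjoint of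
the underlying closed densely defined symmetric operator `A = T ↾ (ker Γ0 ∩ ker Γ1)`. -/
def IsQuasiBoundaryTriple (T : H →ₗ.[ℂ] H) (Γ0 Γ1 : T.domain →ₗ[ℂ] G) : Prop :=
  Dense (T.domain : Set H) ∧
  Dense (Set.range fun f : T.domain => ((Γ0 f, Γ1 f) : G × G)) ∧
  IsSelfAdjoint (kerRestrict T Γ0) ∧
  (∀ f g : T.domain,
    (inner ℂ (T f) ((g : H)) : ℂ) - inner ℂ ((f : H)) (T g)
      = (inner ℂ (Γ1 f) (Γ0 g) : ℂ) - inner ℂ (Γ0 f) (Γ1 g)) ∧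
  T.closure = (kerRestrict T (Γ0.prod Γ1)).adjoint

/-- `R` is the resolvent of the (possibly unbounded) operator `A` at the spectral
parameter `z`. -/
def IsResolventAt (A : H →ₗ.[ℂ] H) (z : ℂ) (R : H →L[ℂ] H) : Prop :=
  (∀ x : H, ∃ hx : R x ∈ A.domain, A ⟨R x, hx⟩ - z • R x = x) ∧
  ∀ f : A.domain, R (A f - z • (f : H)) = (f : H)

open Filter Topology
open scoped ComplexConjugate

section CompactOperator

variable {𝕜 E F : Type*} [NontriviallyNormedField 𝕜] [CompleteSpace 𝕜]
  [NormedAddCommGroup E] [NormedSpace 𝕜 E] [CompleteSpace E]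
  [NormedAddCommGroup F] [NormedSpace 𝕜 F]

theorem IsCompactOperator.finiteDimensional_of_norm_le {K : E →L[𝕜] F} (hK : IsCompactOperator K)
    {N : Submodule 𝕜 E} (hN : IsClosed (N : Set E)) {C : NNReal}
    (hbound : ∀ u ∈ N, ‖u‖ ≤ C * ‖K u‖) : FiniteDimensional 𝕜 N := by
  have : CompleteSpace N := hN.completeSpace_coe
  have hKN : AntilipschitzWith C (K ∘L N.subtypeL) :=
    (K ∘L N.subtypeL).antilipschitz_of_bound fun u => hbound u u.2
  obtain ⟨S, hS, hKS⟩ := hK.image_closedBall_subset_compact 1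
  have hpre : IsCompact ((K ∘L N.subtypeL : N → F) ⁻¹' S) :=
    (hKN.isClosedEmbedding (K ∘L N.subtypeL).uniformContinuous).isCompact_preimage hS
  exact FiniteDimensional.of_isCompact_closedBall₀ 𝕜 zero_lt_one
    (hpre.of_isClosed_subset Metric.isClosed_closedBall fun u hu => hKS ⟨u, hu, rfl⟩)

end CompactOperator

section OneSubCompact

variable {𝕜 E : Type*} [RCLike 𝕜] [NormedAddCommGroup E] [InnerProductSpace 𝕜 E] {K : E →L[𝕜] E}

theorem IsCompactOperator.exists_antilipschitzWith_one_sub_orthogonal_ker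
    (hK : IsCompactOperator K) :
    ∃ C, AntilipschitzWith C ((1 - K : E →L[𝕜] E) ∘L (1 - K : E →L[𝕜] E).kerᗮ.subtypeL) := by
  set S : E →L[𝕜] E := 1 - K with hS
  rw [antilipschitzWith_iff_exists_mul_le_norm]
  by_contra! hsmall
  have hseq : ∀ n : ℕ, ∃ u : S.kerᗮ, ‖u‖ = 1 ∧ ‖S u‖ < 1 / (n + 1) := by
    intro n
    obtain ⟨v, hv⟩ := hsmall (1 / (n + 1)) (by positivity)
    have hv0 : v ≠ 0 := by rintro rfl; simp at hv
    refine ⟨(‖v‖⁻¹ : 𝕜) • v, by simp [norm_smul, hv0], ?_⟩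
    calc ‖S ((‖v‖⁻¹ : 𝕜) • v : S.kerᗮ)‖ = ‖v‖⁻¹ * ‖S v‖ := by simp [norm_smul]
      _ < ‖v‖⁻¹ * (1 / (n + 1) * ‖v‖) := by gcongr; exact hv
      _ = 1 / (n + 1) := by field_simp [norm_ne_zero_iff.mpr hv0]
  choose u hu1 hSu using hseq
  have hSu0 : Tendsto (fun n => S (u n)) atTop (𝓝 0) :=
    squeeze_zero_norm (fun n => (hSu n).le) tendsto_one_div_add_atTop_nhds_zero_nat
  obtain ⟨C, hC, hKC⟩ := hK.image_closedBall_subset_compact 1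
  obtain ⟨y, -, φ, hφ, hKy⟩ :=
    hC.tendsto_subseq (x := fun n => K (u n)) fun n => hKC ⟨u n, by simpa using (hu1 n).le, rfl⟩
  -- `u = S u + K u`, and `S u → 0`
  have hu : Tendsto (fun n => (u (φ n) : E)) atTop (𝓝 y) := by
    simpa [hS] using (hSu0.comp hφ.tendsto_atTop).add hKy
  have hyN : y ∈ S.kerᗮ :=
    (Submodule.isClosed_orthogonal _).mem_of_tendsto hu (Eventually.of_forall fun n => (u (φ n)).2)
  have hyker : y ∈ S.ker :=
    tendsto_nhds_unique ((S.continuous.tendsto y).comp hu) (hSu0.comp hφ.tendsto_atTop)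
  have hy1 : ‖y‖ = 1 :=
    tendsto_nhds_unique ((continuous_norm.tendsto y).comp hu) (by
      simp [Function.comp_def, show ∀ n, ‖(u n : E)‖ = 1 from hu1])
  simp [Submodule.disjoint_def.mp (Submodule.orthogonal_disjoint _) y hyker hyN] at hy1

theorem norm_le_norm_apply_of_mem_orthogonal_range_one_sub {u : E}
    (hu : u ∈ (1 - K : E →L[𝕜] E).rangeᗮ) : ‖u‖ ≤ ‖K u‖ := by
  -- `u ⊥ (1 - K) u` means `‖u‖² = ⟪K u, u⟫`
  have h : inner 𝕜 (u - K u) u = 0 :=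
    Submodule.inner_right_of_mem_orthogonal (LinearMap.mem_range_self _ u) hu
  rw [inner_sub_left, sub_eq_zero] at h
  have h2 : ‖u‖ * ‖u‖ ≤ ‖K u‖ * ‖u‖ :=
    calc ‖u‖ * ‖u‖ = RCLike.re (inner 𝕜 (K u) u) := by rw [← h, inner_self_eq_norm_mul_norm]
      _ ≤ ‖inner 𝕜 (K u) u‖ := RCLike.re_le_norm _
      _ ≤ ‖K u‖ * ‖u‖ := norm_inner_le_norm _ _
  rcases (norm_nonneg u).eq_or_lt with hu0 | hu0
  · simp [← hu0]
  · exact le_of_mul_le_mul_right h2 hu0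

variable [CompleteSpace E]

theorem IsCompactOperator.isClosed_range_one_sub (hK : IsCompactOperator K) :
    IsClosed ((1 - K : E →L[𝕜] E).range : Set E) := by
  obtain ⟨C, hC⟩ := hK.exists_antilipschitzWith_one_sub_orthogonal_ker
  have : CompleteSpace (1 - K : E →L[𝕜] E).ker :=
    (ContinuousLinearMap.isClosed_ker _).completeSpace_coe
  convert hC.isClosed_range (ContinuousLinearMap.uniformContinuous _) using 1
  ext x
  constructor
  · rintro ⟨v, rfl⟩
    obtain ⟨a, ha, b, hb, rfl⟩ := (1 - K : E →L[𝕜] E).ker.exists_add_mem_mem_orthogonal v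
    refine ⟨⟨b, hb⟩, ?_⟩
    simp only [ContinuousLinearMap.comp_apply, Submodule.subtypeL_apply, map_add]
    rw [LinearMap.mem_ker.mp ha, zero_add]
    rfl
  · rintro ⟨b, rfl⟩
    exact ⟨b, rfl⟩

theorem IsCompactOperator.finiteDimensional_quotient_range_one_sub (hK : IsCompactOperator K) :
    FiniteDimensional 𝕜 (E ⧸ (1 - K : E →L[𝕜] E).range) := by
  set W := (1 - K : E →L[𝕜] E).range
  have : CompleteSpace W := hK.isClosed_range_one_sub.completeSpace_coe
  have : FiniteDimensional 𝕜 Wᗮ :=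
    hK.finiteDimensional_of_norm_le (C := 1) (Submodule.isClosed_orthogonal W) fun u hu => by
      simpa using norm_le_norm_apply_of_mem_orthogonal_range_one_sub hu
  exact (Submodule.quotientEquivOfIsCompl W Wᗮ W.isCompl_orthogonal).symm.finiteDimensional

theorem IsCompactOperator.eq_top_of_range_one_sub_le {V : Submodule 𝕜 E} (hK : IsCompactOperator K)
    (hV : Dense (V : Set E)) (hKV : (1 - K : E →L[𝕜] E).range ≤ V) : V = ⊤ := by
  have := hK.finiteDimensional_quotient_range_one_sub
  have hVc := Submodule.isClosed_mono_of_finiteDimensional_quotient hK.isClosed_range_one_sub hKV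
  exact SetLike.coe_injective (hVc.closure_eq.symm.trans hV.closure_eq)

end OneSubCompact

theorem isUnit_one_sub_mul_comm {A : Type*} [Ring A] {a b : A} (h : IsUnit (1 - a * b)) :
    IsUnit (1 - b * a) := by
  have := (spectrum.unit_mem_mul_comm (R := ℤ) (a := a) (b := b) (r := 1)).not
  simpa [spectrum.mem_iff] using this.mp (by simpa [spectrum.mem_iff] using h)

theorem Ring.inverse_apply_eq_of_apply_eq {R V : Type*} [Semiring R] [TopologicalSpace V]
    [AddCommMonoid V] [Module R V] {u : V →L[R] V} (hu : IsUnit u) {a b : V} (h : u a = b) :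
    Ring.inverse u b = a := by
  rw [← h]
  exact DFunLike.congr_fun (Ring.inverse_mul_cancel _ hu) a

section SelfAdjoint

variable {𝕜 E : Type*} [RCLike 𝕜] [NormedAddCommGroup E] [InnerProductSpace 𝕜 E] [CompleteSpace E]
  {A : E →ₗ.[𝕜] E}

theorem IsSelfAdjoint.isFormalAdjoint (hA : IsSelfAdjoint A) : A.IsFormalAdjoint A := by
  have h := LinearPMap.adjoint_isFormalAdjoint hA.dense_domain (T := A)
  rwa [LinearPMap.isSelfAdjoint_def.mp hA] at h

theorem IsSelfAdjoint.exists_mem_domain_apply_eq (hA : IsSelfAdjoint A) {y w : E}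
    (h : ∀ a : A.domain, inner 𝕜 w (a : E) = inner 𝕜 y (A a)) :
    ∃ hy : y ∈ A.domain, A ⟨y, hy⟩ = w := by
  have hA' : A.adjoint = A := hA
  have hy : y ∈ A.adjoint.domain := LinearPMap.mem_adjoint_domain_of_exists y ⟨w, h⟩
  refine ⟨hA' ▸ hy, ?_⟩
  rw [← (le_of_eq hA').2 (x := ⟨y, hy⟩) rfl]
  exact LinearPMap.adjoint_apply_eq hA.dense_domain _ h

end SelfAdjoint

section Resolvent

variable {E : Type*} [NormedAddCommGroup E] [InnerProductSpace ℂ E] {A : E →ₗ.[ℂ] E} {z : ℂ}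
  {R : E →L[ℂ] E}

/-- `h` says that `y ∈ dom A*` with `A* y = w`. -/
theorem IsResolventAt.inner_eq (hR : IsResolventAt A z R) {y w : E}
    (h : ∀ a : A.domain, inner ℂ w (a : E) = inner ℂ y (A a)) (x : E) :
    inner ℂ y x = inner ℂ (w - conj z • y) (R x) := by
  obtain ⟨hx, hRx⟩ := hR.1 x
  conv_lhs => rw [← hRx]
  rw [inner_sub_right, ← h, inner_sub_left, inner_smul_left, inner_smul_right, Complex.conj_conj]

variable [CompleteSpace E]

theorem IsResolventAt.conj_of_isSelfAdjoint (hA : IsSelfAdjoint A) (hR : IsResolventAt A z R) :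
    IsResolventAt A (conj z) (ContinuousLinearMap.adjoint R) := by
  constructor
  · intro x
    obtain ⟨hx, hAx⟩ := hA.exists_mem_domain_apply_eq (y := ContinuousLinearMap.adjoint R x)
      (w := x + conj z • ContinuousLinearMap.adjoint R x) fun a => by
        have hRA : R (A a) = a + z • R a := by
          have h := hR.2 a
          rw [map_sub, map_smul] at h
          exact sub_eq_iff_eq_add.mp h
        rw [ContinuousLinearMap.adjoint_inner_left, hRA, inner_add_right, inner_smul_right,
          inner_add_left, inner_smul_left, Complex.conj_conj,
          ContinuousLinearMap.adjoint_inner_left]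
    exact ⟨hx, by rw [hAx, add_sub_cancel_right]⟩
  · intro a
    refine ext_inner_right ℂ fun t => ?_
    rw [ContinuousLinearMap.adjoint_inner_left, ← hR.inner_eq (hA.isFormalAdjoint a)]

theorem isSelfAdjoint_of_isResolventAt (hA : A.IsFormalAdjoint A) (hR : IsResolventAt A z R)
    (hsurj : ∀ y : E, ∃ u : A.domain, A u - conj z • (u : E) = y) : IsSelfAdjoint A := by
  have hdense : Dense (A.domain : Set E) := by
    rw [Submodule.dense_iff_topologicalClosure_eq_top, Submodule.topologicalClosure_eq_top_iff,
      Submodule.eq_bot_iff]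
    intro y hy
    obtain ⟨u, rfl⟩ := hsurj y
    have hu : u = 0 := Subtype.ext <| ext_inner_right ℂ fun x => by
      rw [hR.inner_eq (hA u) x, Submodule.coe_zero, inner_zero_left]
      exact Submodule.inner_left_of_mem_orthogonal (hR.1 x).1 hy
    simp [hu]
  have hmax : ∀ y : A.adjoint.domain, ∃ u : A.domain, (u : E) = y ∧ A u = A.adjoint y := by
    intro y
    obtain ⟨u, hu⟩ := hsurj (A.adjoint y - conj z • (y : E))
    have huy : (u : E) = y := ext_inner_right ℂ fun x => by
      rw [hR.inner_eq (hA u), hR.inner_eq (LinearPMap.adjoint_isFormalAdjoint hdense y), hu]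
    rw [huy] at hu
    exact ⟨u, huy, sub_left_inj.mp hu⟩
  refine LinearPMap.isSelfAdjoint_def.mpr (le_antisymm ?_ (hA.le_adjoint hdense))
  refine ⟨fun y hy => ?_, fun y a hya => ?_⟩
  · obtain ⟨u, hu, -⟩ := hmax ⟨y, hy⟩
    exact (show (u : E) = y from hu) ▸ u.2
  · obtain ⟨u, hu, hAu⟩ := hmax y
    rw [← hAu]
    congr 1
    exact Subtype.ext (hu.trans hya)

end Resolvent

section KerRestrict

variable {E F : Type*} [NormedAddCommGroup E] [InnerProductSpace ℂ E] [AddCommGroup F] [Module ℂ F]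
  {T : E →ₗ.[ℂ] E} {Γ : T.domain →ₗ[ℂ] F}

theorem mem_kerRestrict_domain {x : E} :
    x ∈ (kerRestrict T Γ).domain ↔ ∃ f : T.domain, Γ f = 0 ∧ (f : E) = x := by
  constructor
  · rintro ⟨⟨f, hf, hfx⟩, -⟩
    exact ⟨f, hf, hfx⟩
  · rintro ⟨f, hf, rfl⟩
    exact ⟨⟨f, hf, rfl⟩, f.2⟩

theorem kerRestrict_apply (x : (kerRestrict T Γ).domain) {f : T.domain} (h : (x : E) = f) :
    kerRestrict T Γ x = T f :=
  LinearPMap.domRestrict_apply h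

theorem isFormalAdjoint_kerRestrict
    (h : ∀ f g : T.domain, Γ f = 0 → Γ g = 0 → inner ℂ (T f) (g : E) = inner ℂ (f : E) (T g)) :
    (kerRestrict T Γ).IsFormalAdjoint (kerRestrict T Γ) := by
  intro a b
  obtain ⟨f, hf, hfa⟩ := mem_kerRestrict_domain.mp a.2
  obtain ⟨g, hg, hgb⟩ := mem_kerRestrict_domain.mp b.2
  rw [kerRestrict_apply a hfa.symm, kerRestrict_apply b hgb.symm, ← hfa, ← hgb]
  exact h f g hf hg

variable {z : ℂ} {R : E →L[ℂ] E}

theorem IsResolventAt.exists_kerRestrict (hR : IsResolventAt (kerRestrict T Γ) z R) (x : E) :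
    ∃ f : T.domain, Γ f = 0 ∧ (f : E) = R x ∧ T f - z • (f : E) = x := by
  obtain ⟨hx, hRx⟩ := hR.1 x
  obtain ⟨f, hf, hfx⟩ := mem_kerRestrict_domain.mp hx
  refine ⟨f, hf, hfx, ?_⟩
  rwa [kerRestrict_apply ⟨R x, hx⟩ hfx.symm, ← hfx] at hRx

theorem IsResolventAt.apply_kerRestrict (hR : IsResolventAt (kerRestrict T Γ) z R) {f : T.domain}
    (hf : Γ f = 0) : R (T f - z • (f : E)) = f := by
  have hf' : (f : E) ∈ (kerRestrict T Γ).domain := mem_kerRestrict_domain.mpr ⟨f, hf, rfl⟩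
  have h := hR.2 ⟨f, hf'⟩
  rwa [kerRestrict_apply _ (f := f) rfl] at h

theorem IsResolventAt.eq_zero_of_apply_eq_smul (hR : IsResolventAt (kerRestrict T Γ) z R)
    {f : T.domain} (hf : Γ f = 0) (hfz : T f = z • (f : E)) : f = 0 := by
  have h := hR.apply_kerRestrict hf
  rw [hfz, sub_self, map_zero] at h
  exact Subtype.ext h.symm

/-- Take `f - p`, where `p ∈ ker Γ` solves `(T - z) p = (T - z) f`. -/
theorem IsResolventAt.exists_apply_eq_smul_map_eq (hR : IsResolventAt (kerRestrict T Γ) z R)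
    (f : T.domain) : ∃ g : T.domain, T g = z • (g : E) ∧ Γ g = Γ f := by
  obtain ⟨p, hp, -, hpT⟩ := hR.exists_kerRestrict (T f - z • (f : E))
  refine ⟨f - p, ?_, by rw [map_sub, hp, sub_zero]⟩
  rw [LinearPMap.map_sub, Submodule.coe_sub, smul_sub]
  linear_combination (norm := module) -hpT

end KerRestrict

section BoundaryTriple

variable {E F : Type*} [NormedAddCommGroup E] [InnerProductSpace ℂ E]
  [NormedAddCommGroup F] [InnerProductSpace ℂ F]

/-- `M` is the value at `z` of the Weyl function of `{F, Γ0, Γ1}`. -/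
def IsWeylAt (T : E →ₗ.[ℂ] E) (Γ0 Γ1 : T.domain →ₗ[ℂ] F) (z : ℂ) (M : F →L[ℂ] F) : Prop :=
  ∀ f : T.domain, T f = z • (f : E) → M (Γ0 f) = Γ1 f

def GreenIdentity (T : E →ₗ.[ℂ] E) (Γ0 Γ1 : T.domain →ₗ[ℂ] F) : Prop :=
  ∀ f g : T.domain, inner ℂ (T f) (g : E) - inner ℂ (f : E) (T g)
    = inner ℂ (Γ1 f) (Γ0 g) - inner ℂ (Γ0 f) (Γ1 g)

/-- Its kernel is the domain of the Robin realization `A_[B]`. -/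
def robinMap {T : E →ₗ.[ℂ] E} (B : F →L[ℂ] F) (Γ0 Γ1 : T.domain →ₗ[ℂ] F) : T.domain →ₗ[ℂ] F :=
  (B : F →ₗ[ℂ] F) ∘ₗ Γ1 - Γ0

variable {T : E →ₗ.[ℂ] E} {Γ0 Γ1 : T.domain →ₗ[ℂ] F} {B : F →L[ℂ] F} {z : ℂ} {R : E →L[ℂ] E}
  {M : F →L[ℂ] F}

@[simp]
theorem robinMap_apply (f : T.domain) : robinMap B Γ0 Γ1 f = B (Γ1 f) - Γ0 f := rfl

theorem IsResolventAt.exists_apply_eq_smul_of_surjective (hsurj : Function.Surjective Γ0)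
    (hR : IsResolventAt (kerRestrict T Γ0) z R) (c : F) :
    ∃ f : T.domain, T f = z • (f : E) ∧ Γ0 f = c := by
  obtain ⟨f, rfl⟩ := hsurj c
  exact hR.exists_apply_eq_smul_map_eq f

theorem IsWeylAt.adjoint [CompleteSpace F] (hgreen : GreenIdentity T Γ0 Γ1)
    (hsurj : Function.Surjective Γ0) (hR : IsResolventAt (kerRestrict T Γ0) z R)
    (hM : IsWeylAt T Γ0 Γ1 z M) : IsWeylAt T Γ0 Γ1 (conj z) (ContinuousLinearMap.adjoint M) := by
  intro f hf
  refine ext_inner_right ℂ fun c => ?_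
  obtain ⟨g, hg, rfl⟩ := hR.exists_apply_eq_smul_of_surjective hsurj c
  have h := hgreen f g
  rw [hf, hg, inner_smul_left, inner_smul_right, Complex.conj_conj, sub_self] at h
  rw [ContinuousLinearMap.adjoint_inner_left, hM g hg]
  linear_combination h

theorem isFormalAdjoint_kerRestrict_robinMap [CompleteSpace F] (hgreen : GreenIdentity T Γ0 Γ1)
    (hB : IsSelfAdjoint B) :
    (kerRestrict T (robinMap B Γ0 Γ1)).IsFormalAdjoint (kerRestrict T (robinMap B Γ0 Γ1)) := by
  refine isFormalAdjoint_kerRestrict fun f g hf hg => ?_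
  rw [robinMap_apply, sub_eq_zero] at hf hg
  rw [← sub_eq_zero, hgreen f g, ← hf, ← hg, ← ContinuousLinearMap.adjoint_inner_right,
    hB.adjoint_eq, sub_self]

theorem exists_kerRestrict_robinMap_sub_smul_eq (hsurj : Function.Surjective Γ0)
    (hR : IsResolventAt (kerRestrict T Γ0) z R) (hM : IsWeylAt T Γ0 Γ1 z M)
    (hU : IsUnit (1 - B ∘L M)) (y : E) :
    ∃ u : (kerRestrict T (robinMap B Γ0 Γ1)).domain,
      kerRestrict T (robinMap B Γ0 Γ1) u - z • (u : E) = y := by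
  obtain ⟨g, hg, -, hgT⟩ := hR.exists_kerRestrict y
  obtain ⟨c, hc⟩ : ∃ c, (1 - B ∘L M) c = B (Γ1 g) := by
    obtain ⟨U, hU⟩ := hU
    exact hU ▸ (ContinuousLinearEquiv.ofUnit U).surjective _
  obtain ⟨v, hvT, hv⟩ := hR.exists_apply_eq_smul_of_surjective hsurj c
  have hgv : robinMap B Γ0 Γ1 (g + v) = 0 := by
    simp only [robinMap_apply, map_add, ← hM v hvT, hg, hv, ← hc]
    simp
  refine ⟨⟨g + v, mem_kerRestrict_domain.mpr ⟨_, hgv, rfl⟩⟩, ?_⟩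
  rw [kerRestrict_apply _ (f := g + v) rfl]
  change T (g + v) - z • ((g + v : T.domain) : E) = y
  rw [LinearPMap.map_add, hvT, Submodule.coe_add, smul_add, ← hgT]
  abel

theorem range_robinMap_eq_top [CompleteSpace F]
    (hjoint : Dense (Set.range fun f : T.domain => ((Γ0 f, Γ1 f) : F × F)))
    (hsurj : Function.Surjective Γ0) (hR : IsResolventAt (kerRestrict T Γ0) z R)
    (hM : IsWeylAt T Γ0 Γ1 z M) (hK : IsCompactOperator M) :
    LinearMap.range (robinMap B Γ0 Γ1) = ⊤ := by
  refine IsCompactOperator.eq_top_of_range_one_sub_le (K := B ∘L M) (hK.clm_comp B) ?_ ?_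
  · have hφ : Function.Surjective fun p : F × F => B p.2 - p.1 := fun c => ⟨(-c, 0), by simp⟩
    exact hφ.denseRange.comp hjoint (by fun_prop)
  · rintro _ ⟨c, rfl⟩
    obtain ⟨f, hf, rfl⟩ := hR.exists_apply_eq_smul_of_surjective hsurj c
    exact ⟨-f, by simp [hM f hf, neg_add_eq_sub]⟩

theorem isUnit_one_sub_comp_of_isResolventAt [CompleteSpace F] {R0 RB : E →L[ℂ] E}
    (hrange : LinearMap.range (robinMap B Γ0 Γ1) = ⊤) (hsurj : Function.Surjective Γ0)
    (hR0 : IsResolventAt (kerRestrict T Γ0) z R0)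
    (hRB : IsResolventAt (kerRestrict T (robinMap B Γ0 Γ1)) z RB) (hM : IsWeylAt T Γ0 Γ1 z M) :
    IsUnit (1 - B ∘L M) := by
  refine ContinuousLinearMap.isUnit_iff_bijective.mpr ⟨?_, fun c => ?_⟩
  · refine (injective_iff_map_eq_zero _).mpr fun c hc => ?_
    obtain ⟨f, hf, rfl⟩ := hR0.exists_apply_eq_smul_of_surjective hsurj c
    have hfB : robinMap B Γ0 Γ1 f = 0 := by
      have hc' : Γ0 f - B (M (Γ0 f)) = 0 := hc
      rw [robinMap_apply, ← hM f hf, ← neg_sub, hc', neg_zero]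
    rw [hRB.eq_zero_of_apply_eq_smul hfB hf, map_zero]
  · obtain ⟨f, hf⟩ := LinearMap.range_eq_top.mp hrange (-c)
    obtain ⟨g, hg, hgf⟩ := hRB.exists_apply_eq_smul_map_eq f
    refine ⟨Γ0 g, ?_⟩
    rw [hf, robinMap_apply, ← hM g hg] at hgf
    simp [← neg_eq_iff_eq_neg.mpr hgf]

theorem krein_formula {R0 RB : E →L[ℂ] E}
    (hRB : IsResolventAt (kerRestrict T (robinMap B Γ0 Γ1)) z RB)
    (hR0 : IsResolventAt (kerRestrict T Γ0) z R0) (hM : IsWeylAt T Γ0 Γ1 z M)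
    (hU : IsUnit (1 - B ∘L M)) (hU' : IsUnit (1 - M ∘L B)) {γstar : E →L[ℂ] F}
    (hγ : ∀ x : E, ∃ hx : R0 x ∈ T.domain, γstar x = Γ1 ⟨R0 x, hx⟩) (x : E) :
    ∃ f : T.domain, T f = z • (f : E) ∧
      Γ0 f = Ring.inverse (1 - B ∘L M) (B (γstar x)) ∧
      Γ0 f = B (Ring.inverse (1 - M ∘L B) (γstar x)) ∧
      RB x - R0 x = f := by
  obtain ⟨fB, hfB, hfBx, hfBT⟩ := hRB.exists_kerRestrict x
  obtain ⟨f0, hf0, hf0x, hf0T⟩ := hR0.exists_kerRestrict x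
  obtain ⟨hx, hγR0⟩ := hγ x
  have hγx : γstar x = Γ1 f0 := by rw [hγR0]; exact congrArg Γ1 (Subtype.ext hf0x.symm)
  have hfBbd : B (Γ1 fB) = Γ0 fB := sub_eq_zero.mp hfB
  have hfT : T (fB - f0) = z • ((fB - f0 : T.domain) : E) := by
    rw [LinearPMap.map_sub, Submodule.coe_sub, smul_sub]
    linear_combination (norm := module) hfBT - hf0T
  have hΓ0 : Γ0 (fB - f0) = B (Γ1 fB) := by rw [map_sub, hf0, sub_zero, hfBbd]
  have hΓ1 : Γ1 (fB - f0) = Γ1 fB - γstar x := by rw [map_sub, hγx]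
  refine ⟨fB - f0, hfT, Ring.inverse_apply_eq_of_apply_eq hU ?_ |>.symm, ?_, ?_⟩
  · change Γ0 (fB - f0) - B (M (Γ0 (fB - f0))) = B (γstar x)
    rw [hM _ hfT, hΓ1, hΓ0, map_sub]
    abel
  · rw [Ring.inverse_apply_eq_of_apply_eq hU' (a := Γ1 fB), hΓ0]
    change Γ1 fB - M (B (Γ1 fB)) = γstar x
    rw [← hΓ0, hM _ hfT, hΓ1]
    abel
  · rw [Submodule.coe_sub, hfBx, hf0x]

end BoundaryTriple

theorem robin_selfAdjoint_and_krein_general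
    (T : H →ₗ.[ℂ] H) (Γ0 Γ1 : T.domain →ₗ[ℂ] G)
    (hQBT : IsQuasiBoundaryTriple T Γ0 Γ1)
    (hsurj : Function.Surjective Γ0)
    -- compactness of the Weyl function at some `λ0 ∈ ρ(A0)`:
    {lam0 : ℂ} (R00 : H →L[ℂ] H) (hR00 : IsResolventAt (kerRestrict T Γ0) lam0 R00)
    (Mlam0 : G →L[ℂ] G)
    (hMlam0 : ∀ f : T.domain, T f = lam0 • (f : H) → Mlam0 (Γ0 f) = Γ1 f)
    (hMcpt : IsCompactOperator Mlam0)
    -- the boundary parameter: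
    (B : G →L[ℂ] G) (hB : IsSelfAdjoint B)
    -- spectral data at `λ ∈ ρ(A_[B]) ∩ ρ(A0)`:
    {lam : ℂ} (RB R0 : H →L[ℂ] H)
    (hRB : IsResolventAt (kerRestrict T ((B : G →ₗ[ℂ] G) ∘ₗ Γ1 - Γ0)) lam RB)
    (hR0 : IsResolventAt (kerRestrict T Γ0) lam R0)
    (Mlam : G →L[ℂ] G)
    (hMlam : ∀ f : T.domain, T f = lam • (f : H) → Mlam (Γ0 f) = Γ1 f)
    (γstarlam : H →L[ℂ] G)
    (hγstar : ∀ x : H, ∃ hx : R0 x ∈ T.domain, γstarlam x = Γ1 ⟨R0 x, hx⟩) :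
    -- `A_[B]` is self-adjoint:
    IsSelfAdjoint (kerRestrict T ((B : G →ₗ[ℂ] G) ∘ₗ Γ1 - Γ0)) ∧
    -- `(I − BM(λ))⁻¹, (I − M(λ)B)⁻¹ ∈ B(G)`:
    IsUnit (1 - B ∘L Mlam) ∧ IsUnit (1 - Mlam ∘L B) ∧
    -- Krein's formula, in both factorized forms:
    (∀ x : H, ∃ f : T.domain,
      T f = lam • (f : H) ∧
      Γ0 f = Ring.inverse (1 - B ∘L Mlam) (B (γstarlam x)) ∧
      Γ0 f = B (Ring.inverse (1 - Mlam ∘L B) (γstarlam x)) ∧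
      RB x - R0 x = (f : H)) := by
  obtain ⟨-, hjoint, hA0, hgreen, -⟩ := hQBT
  have hrange := range_robinMap_eq_top (B := B) hjoint hsurj hR00 hMlam0 hMcpt
  have hU : IsUnit (1 - B ∘L Mlam) :=
    isUnit_one_sub_comp_of_isResolventAt hrange hsurj hR0 hRB hMlam
  have hU' : IsUnit (1 - Mlam ∘L B) := isUnit_one_sub_mul_comm hU
  have hUconj : IsUnit (1 - B ∘L ContinuousLinearMap.adjoint Mlam) := by
    have h : star (1 - Mlam ∘L B) = 1 - B ∘L ContinuousLinearMap.adjoint Mlam := by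
      rw [star_sub, star_one, ContinuousLinearMap.star_eq_adjoint,
        ContinuousLinearMap.adjoint_comp, hB.adjoint_eq]
    exact h ▸ hU'.star
  have hsurjConj := exists_kerRestrict_robinMap_sub_smul_eq hsurj
    (hR0.conj_of_isSelfAdjoint hA0) (IsWeylAt.adjoint hgreen hsurj hR0 hMlam) hUconj
  exact ⟨isSelfAdjoint_of_isResolventAt (isFormalAdjoint_kerRestrict_robinMap hgreen hB) hRB
    hsurjConj, hU, hU', krein_formula hRB hR0 hMlam hU hU' hγstar⟩

/-- Self-adjointness of the non-local Robin realization `A_[B] = T ↾ ker(BΓ1 − Γ0)` and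
Krein's formula.  Assume `ran Γ0 = G`, `A1 = T ↾ ker Γ1` is self-adjoint and the Weyl
function `M(λ0)` is compact at some point `λ0 ∈ ρ(A0)`.  Then for bounded self-adjoint `B`,
`A_[B]` is self-adjoint; moreover if `λ ∈ ρ(A_[B]) ∩ ρ(A0)` then `I − BM(λ)` and
`I − M(λ)B` are boundedly invertible and
`(A_[B] − λ)⁻¹ − (A0 − λ)⁻¹ = γ(λ)(I − BM(λ))⁻¹ B γ(λ̄)* = γ(λ) B (I − M(λ)B)⁻¹ γ(λ̄)*`. -/
theorem robin_selfAdjoint_and_krein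
    (T : H →ₗ.[ℂ] H) (Γ0 Γ1 : T.domain →ₗ[ℂ] G)
    (hQBT : IsQuasiBoundaryTriple T Γ0 Γ1)
    (hsurj : Function.Surjective Γ0)
    (hA1 : IsSelfAdjoint (kerRestrict T Γ1))
    -- compactness of the Weyl function at some `λ0 ∈ ρ(A0)`:
    {lam0 : ℂ} (R00 : H →L[ℂ] H) (hR00 : IsResolventAt (kerRestrict T Γ0) lam0 R00)
    (Mlam0 : G →L[ℂ] G)
    (hMlam0 : ∀ f : T.domain, T f = lam0 • (f : H) → Mlam0 (Γ0 f) = Γ1 f)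
    (hMcpt : IsCompactOperator Mlam0)
    -- the boundary parameter:
    (B : G →L[ℂ] G) (hB : IsSelfAdjoint B)
    -- spectral data at `λ ∈ ρ(A_[B]) ∩ ρ(A0)`:
    {lam : ℂ} (RB R0 : H →L[ℂ] H)
    (hRB : IsResolventAt (kerRestrict T ((B : G →ₗ[ℂ] G) ∘ₗ Γ1 - Γ0)) lam RB)
    (hR0 : IsResolventAt (kerRestrict T Γ0) lam R0)
    (Mlam : G →L[ℂ] G)
    (hMlam : ∀ f : T.domain, T f = lam • (f : H) → Mlam (Γ0 f) = Γ1 f)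
    (γstarlam : H →L[ℂ] G)
    (hγstar : ∀ x : H, ∃ hx : R0 x ∈ T.domain, γstarlam x = Γ1 ⟨R0 x, hx⟩) :
    -- `A_[B]` is self-adjoint:
    IsSelfAdjoint (kerRestrict T ((B : G →ₗ[ℂ] G) ∘ₗ Γ1 - Γ0)) ∧
    -- `(I − BM(λ))⁻¹, (I − M(λ)B)⁻¹ ∈ B(G)`:
    IsUnit (1 - B ∘L Mlam) ∧ IsUnit (1 - Mlam ∘L B) ∧
    -- Krein's formula, in both factorized forms:
    (∀ x : H, ∃ f : T.domain,
      T f = lam • (f : H) ∧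
      Γ0 f = Ring.inverse (1 - B ∘L Mlam) (B (γstarlam x)) ∧
      Γ0 f = B (Ring.inverse (1 - Mlam ∘L B) (γstarlam x)) ∧
      RB x - R0 x = (f : H)) :=
  robin_selfAdjoint_and_krein_general T Γ0 Γ1 hQBT hsurj R00 hR00 Mlam0 hMlam0 hMcpt B hB RB R0 hRB
    hR0 Mlam hMlam γstarlam hγstar
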